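/- Let q be an odd prime power, N ≥ 0, μ ⊢ N, λ ⊢ N+2 with μ ↗↗ λ (the two boxes of λ\μ lie in one column or two consecutive columns). Let L̃(λ, μ) be given by: q^{2N − 2Σ_{j≥k} m_j(μ)}(1 − (−q)^{−m_{k−1}(μ)})(1 − (−q)^{1−m_{k−1}(μ)}) for a vertical domino in column k, and q^{2N − 2Σ_{j≥k} m_j(μ)}(q−1)(1 − (−q)^{−m_{k−1}(μ)}) for boxes in columns k, k+1 (with (−q)^{−m_0(μ)} := 0). Let ξ_{λ/μ}(t) be the p_2-Pieri coefficient for modified Hall–Littlewood functions: (1 − t^{m_{k−1}})(1 − t^{m_{k−1}−1}) in the domino case and (−t)^{m_k}(1+t)(1 − t^{m_{k−1}}) in the two-column case. Then L̃(λ, μ) = ξ_{λ/μ}(−q^{−1}) · q^{n(μ) − n(λ) + 2N + 1}. -/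

import Mathlib

/-
Write `μ'_j = conjP μ j` for the column lengths. Summing `i * μ i` by columns gives
`n(μ) = Σ_{j ≥ 1} (0 + 1 + ⋯ + (μ'_j - 1))`, so adding a vertical domino in column `k` raises `n`
by `2μ'_k + 1`, and adding one box in each of the columns `k, k + 1` raises it by
`μ'_k + μ'_{k+1} = 2μ'_k - m_k(μ)`. Since also `Σ_{j ≥ k} m_j(μ) = μ'_k` (telescoping) and
`μ'_k ≤ |μ| = N`, both sides become the same power of `q` times the same factors in
`(-q)^{-m_{k-1}(μ)}`.
-/

open scoped BigOperators

def IsPartitionFun (f : ℕ → ℕ) : Prop := Antitone f ∧ ∃ N, ∀ n, N ≤ n → f n = 0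

def PartitionF : Type := {f : ℕ → ℕ // IsPartitionFun f}

noncomputable def psize (μ : PartitionF) : ℕ := ∑ᶠ i, μ.val i

noncomputable def conjP (μ : ℕ → ℕ) (k : ℕ) : ℕ := Nat.card {i : ℕ | k ≤ μ i}

noncomputable def mcount (μ : ℕ → ℕ) (j : ℕ) : ℕ := Nat.card {i : ℕ | μ i = j}

noncomputable def nstat (μ : ℕ → ℕ) : ℕ := ∑ᶠ i, i * μ i

/-- `λ` is obtained from `μ` by adding a vertical domino in column `k`. -/
def VDom (μ lam : ℕ → ℕ) (k : ℕ) : Prop :=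
  conjP lam k = conjP μ k + 2 ∧ ∀ i, 1 ≤ i → i ≠ k → conjP lam i = conjP μ i

/-- `λ` is obtained from `μ` by adding one box in column `k` and one box in column `k+1`. -/
def TwoCol (μ lam : ℕ → ℕ) (k : ℕ) : Prop :=
  conjP lam k = conjP μ k + 1 ∧ conjP lam (k + 1) = conjP μ (k + 1) + 1 ∧
    ∀ i, 1 ≤ i → i ≠ k → i ≠ k + 1 → conjP lam i = conjP μ i

namespace IsPartitionFun

variable {f : ℕ → ℕ} {j k : ℕ}

theorem lt_conjP_iff (hf : IsPartitionFun f) (hj : 1 ≤ j) (i : ℕ) :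
    i < conjP f j ↔ j ≤ f i := by
  obtain ⟨hanti, M, hM⟩ := hf
  have hex : ∃ n, f n < j := ⟨M, by rw [hM M le_rfl]; omega⟩
  have hset : {i | j ≤ f i} = Set.Iio (Nat.find hex) := by
    ext i
    simp only [Set.mem_ofPred_eq, Set.mem_Iio, Nat.lt_find_iff, not_lt]
    exact ⟨fun h m hm => h.trans (hanti hm), fun h => h i le_rfl⟩
  rw [conjP, hset, Nat.card_coe_set_eq, Set.ncard_Iio_nat, ← Set.mem_Iio, ← hset]
  rfl

theorem conjP_le_conjP (hf : IsPartitionFun f) (hj : 1 ≤ j) (hjk : j ≤ k) :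
    conjP f k ≤ conjP f j := by
  by_contra! h
  have := (hf.lt_conjP_iff (hj.trans hjk) _).mp h
  exact (hf.lt_conjP_iff hj _).mpr (hjk.trans this) |>.false

theorem conjP_eq_zero (hf : IsPartitionFun f) (hj : f 0 < j) : conjP f j = 0 := by
  by_contra h
  have := (hf.lt_conjP_iff (by omega) 0).mp (Nat.pos_of_ne_zero h)
  omega

theorem mcount_add_conjP_succ (hf : IsPartitionFun f) (hj : 1 ≤ j) :
    mcount f j + conjP f (j + 1) = conjP f j := by
  have hset : {i | f i = j} = Set.Ico (conjP f (j + 1)) (conjP f j) := by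
    ext i
    have := hf.lt_conjP_iff hj i
    have := hf.lt_conjP_iff (by omega : 1 ≤ j + 1) i
    simp only [Set.mem_ofPred_eq, Set.mem_Ico]
    omega
  rw [mcount, hset, Nat.card_coe_set_eq, Set.ncard_Ico_nat]
  have := hf.conjP_le_conjP hj (Nat.le_add_right j 1)
  omega

theorem sum_Ico_mcount_add_conjP (hf : IsPartitionFun f) (hk : 1 ≤ k) {n : ℕ} (hkn : k ≤ n) :
    ∑ j ∈ Finset.Ico k n, mcount f j + conjP f n = conjP f k := by
  induction n, hkn using Nat.le_induction with
  | base => simp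
  | succ n hkn ih =>
    rw [Finset.sum_Ico_succ_top hkn, add_assoc, hf.mcount_add_conjP_succ (hk.trans hkn), ih]

theorem finsum_ite_mcount_eq_conjP (hf : IsPartitionFun f) (hk : 1 ≤ k) :
    ∑ᶠ j, (if k ≤ j then mcount f j else 0) = conjP f k := by
  obtain ⟨n, hn0, hkn⟩ : ∃ n, f 0 < n ∧ k ≤ n := ⟨max (f 0 + 1) k, by omega, le_max_right _ _⟩
  have hmcount : ∀ j, f 0 < j → mcount f j = 0 := fun j hj => by
    have := hf.mcount_add_conjP_succ (j := j) (by omega)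
    rw [hf.conjP_eq_zero hj] at this
    omega
  have hsupp : Function.support (fun j => if k ≤ j then mcount f j else 0) ⊆ Finset.Ico k n := by
    intro j hj
    simp only [Function.mem_support, ne_eq, ite_eq_right_iff, not_forall] at hj
    obtain ⟨hkj, hj⟩ := hj
    simp only [Finset.coe_Ico, Set.mem_Ico]
    exact ⟨hkj, by by_contra! h; exact hj (hmcount j (by omega))⟩
  rw [finsum_eq_sum_of_support_subset _ hsupp,
    Finset.sum_congr rfl fun j hj => if_pos (Finset.mem_Ico.mp hj).1,
    ← hf.sum_Ico_mcount_add_conjP hk hkn, hf.conjP_eq_zero hn0, add_zero]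

theorem finsum_mul_eq_sum_conjP (hf : IsPartitionFun f) (w : ℕ → ℕ) {T : ℕ} (hT : f 0 ≤ T) :
    ∑ᶠ i, w i * f i = ∑ j ∈ Finset.Icc 1 T, ∑ i ∈ Finset.range (conjP f j), w i := by
  obtain ⟨M, hM⟩ := hf.2
  have hsupp : Function.support (fun i => w i * f i) ⊆ Finset.range M := by
    intro i hi
    by_contra h
    simp_all
  have hrow : ∀ i, w i * f i = ∑ j ∈ Finset.Icc 1 T, if j ≤ f i then w i else 0 := fun i => by
    have hfil : (Finset.Icc 1 T).filter (· ≤ f i) = Finset.Icc 1 (f i) := by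
      ext a
      have := hf.1 (Nat.zero_le i)
      simp only [Finset.mem_filter, Finset.mem_Icc]
      omega
    rw [← Finset.sum_filter, hfil, Finset.sum_const, Nat.card_Icc, smul_eq_mul,
      Nat.add_sub_cancel, mul_comm]
  rw [finsum_eq_sum_of_support_subset _ hsupp, Finset.sum_congr rfl fun i _ => hrow i,
    Finset.sum_comm]
  refine Finset.sum_congr rfl fun j hj => ?_
  have hj := (Finset.mem_Icc.mp hj).1
  have hfil : (Finset.range M).filter (j ≤ f ·) = Finset.range (conjP f j) := by
    ext i
    simp only [Finset.mem_filter, Finset.mem_range, ← hf.lt_conjP_iff hj]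
    constructor
    · exact fun h => h.2
    · intro h
      refine ⟨?_, h⟩
      by_contra! hMi
      have := (hf.lt_conjP_iff hj i).mp h
      rw [hM i hMi] at this
      omega
  rw [← Finset.sum_filter, hfil]

theorem nstat_eq_sum_conjP (hf : IsPartitionFun f) {T : ℕ} (hT : f 0 ≤ T) :
    nstat f = ∑ j ∈ Finset.Icc 1 T, ∑ i ∈ Finset.range (conjP f j), i :=
  hf.finsum_mul_eq_sum_conjP id hT

end IsPartitionFun

theorem conjP_le_psize (μ : PartitionF) {k : ℕ} (hk : 1 ≤ k) : conjP μ.val k ≤ psize μ := by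
  have hsize : psize μ = ∑ j ∈ Finset.Icc 1 (max (μ.val 0) k), conjP μ.val j := by
    simpa [psize] using μ.2.finsum_mul_eq_sum_conjP 1 (le_max_left _ k)
  rw [hsize]
  exact Finset.single_le_sum (fun _ _ => Nat.zero_le _) (Finset.mem_Icc.mpr ⟨hk, le_max_right _ _⟩)

theorem nstat_add_sum_eq_of_conjP_eq {μ lam : ℕ → ℕ} (hμ : IsPartitionFun μ)
    (hlam : IsPartitionFun lam) {s : Finset ℕ} (hs : ∀ j ∈ s, 1 ≤ j)
    (h : ∀ j, 1 ≤ j → j ∉ s → conjP lam j = conjP μ j) :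
    nstat lam + ∑ j ∈ s, ∑ i ∈ Finset.range (conjP μ j), i =
      nstat μ + ∑ j ∈ s, ∑ i ∈ Finset.range (conjP lam j), i := by
  set T := max (max (μ 0) (lam 0)) (s.sup id)
  have hsub : s ⊆ Finset.Icc 1 T := fun j hj =>
    Finset.mem_Icc.mpr ⟨hs j hj, (Finset.le_sup (f := id) hj).trans (le_max_right _ _)⟩
  have hout : ∑ j ∈ Finset.Icc 1 T \ s, ∑ i ∈ Finset.range (conjP lam j), i
      = ∑ j ∈ Finset.Icc 1 T \ s, ∑ i ∈ Finset.range (conjP μ j), i :=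
    Finset.sum_congr rfl fun j hj => by
      rw [Finset.mem_sdiff, Finset.mem_Icc] at hj
      rw [h j hj.1.1 hj.2]
  rw [hμ.nstat_eq_sum_conjP (T := T) (by omega), hlam.nstat_eq_sum_conjP (T := T) (by omega),
    ← Finset.sum_sdiff hsub, hout,
    ← Finset.sum_sdiff hsub (f := fun j => ∑ i ∈ Finset.range (conjP μ j), i)]
  ring

theorem VDom.nstat_eq {μ lam : ℕ → ℕ} {k : ℕ} (h : VDom μ lam k) (hμ : IsPartitionFun μ)
    (hlam : IsPartitionFun lam) (hk : 1 ≤ k) : nstat lam = nstat μ + 2 * conjP μ k + 1 := by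
  have := nstat_add_sum_eq_of_conjP_eq hμ hlam (s := {k}) (by simpa using hk)
    fun j hj hjk => h.2 j hj (by simpa using hjk)
  simp only [Finset.sum_singleton, h.1, Finset.sum_range_succ] at this
  omega

theorem TwoCol.nstat_eq {μ lam : ℕ → ℕ} {k : ℕ} (h : TwoCol μ lam k) (hμ : IsPartitionFun μ)
    (hlam : IsPartitionFun lam) (hk : 1 ≤ k) :
    nstat lam = nstat μ + conjP μ k + conjP μ (k + 1) := by
  have := nstat_add_sum_eq_of_conjP_eq hμ hlam (s := {k, k + 1}) (by simp; omega)
    fun j hj hjk => h.2.2 j hj (by simp_all) (by simp_all)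
  simp only [Finset.sum_pair (by omega : k ≠ k + 1), h.1, h.2.1, Finset.sum_range_succ] at this
  omega

theorem one_sub_zpow_neg_mul_one_sub_zpow_one_sub {K : Type*} [DivisionRing K] (x : K) (m : ℕ) :
    (1 - x ^ (-(m : ℤ))) * (1 - x ^ (1 - (m : ℤ))) = (1 - x⁻¹ ^ m) * (1 - x⁻¹ ^ (m - 1)) := by
  rcases m with _ | m
  · simp
  · rw [show (1 - ((m + 1 : ℕ) : ℤ)) = -(m : ℤ) by push_cast; ring, ← inv_zpow', ← inv_zpow',
      zpow_natCast, zpow_natCast, Nat.add_sub_cancel]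

theorem pow_mul_sub_one_eq {K : Type*} [Field K] {x : K} (hx : x ≠ 0) (e m : ℕ) :
    x ^ e * (x - 1) = (-(-x⁻¹)) ^ m * (1 + -x⁻¹) * x ^ (e + m + 1) := by
  rw [neg_neg, inv_pow, pow_add, pow_add]
  field_simp
  ring

theorem stmt16_general (q : ℕ) (hpp : IsPrimePow q)
    (N k : ℕ) (hk : 1 ≤ k) (μ lam : PartitionF)
    (hμ : psize μ = N) :
    (VDom μ.val lam.val k →
      (if k = 1 then
          (q : ℚ) ^ (2 * N - 2 * ∑ᶠ j, (if k ≤ j then mcount μ.val j else 0))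
        else
          (q : ℚ) ^ (2 * N - 2 * ∑ᶠ j, (if k ≤ j then mcount μ.val j else 0)) *
            (1 - (-(q : ℚ)) ^ (-(mcount μ.val (k - 1) : ℤ))) *
            (1 - (-(q : ℚ)) ^ (1 - (mcount μ.val (k - 1) : ℤ))))
      = (if k = 1 then 1 else
          (1 - (-(q : ℚ)⁻¹) ^ mcount μ.val (k - 1)) *
            (1 - (-(q : ℚ)⁻¹) ^ (mcount μ.val (k - 1) - 1))) *
          (q : ℚ) ^ ((nstat μ.val : ℤ) - (nstat lam.val : ℤ) + 2 * N + 1)) ∧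
    (TwoCol μ.val lam.val k →
      (if k = 1 then
          (q : ℚ) ^ (2 * N - 2 * ∑ᶠ j, (if k ≤ j then mcount μ.val j else 0)) * ((q : ℚ) - 1)
        else
          (q : ℚ) ^ (2 * N - 2 * ∑ᶠ j, (if k ≤ j then mcount μ.val j else 0)) * ((q : ℚ) - 1) *
            (1 - (-(q : ℚ)) ^ (-(mcount μ.val (k - 1) : ℤ))))
      = (-(-(q : ℚ)⁻¹)) ^ mcount μ.val k * (1 + -(q : ℚ)⁻¹) *
          (if k = 1 then 1 else 1 - (-(q : ℚ)⁻¹) ^ mcount μ.val (k - 1)) *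
          (q : ℚ) ^ ((nstat μ.val : ℤ) - (nstat lam.val : ℤ) + 2 * N + 1)) := by
  have hq : (q : ℚ) ≠ 0 := by exact_mod_cast hpp.pos.ne'
  have hkN : conjP μ.val k ≤ N := hμ ▸ conjP_le_psize μ hk
  rw [μ.2.finsum_ite_mcount_eq_conjP hk]
  constructor
  · intro h
    have hexp : (nstat μ.val : ℤ) - nstat lam.val + 2 * N + 1
        = ((2 * N - 2 * conjP μ.val k : ℕ) : ℤ) := by
      rw [h.nstat_eq μ.2 lam.2 hk]
      omega
    rw [hexp, zpow_natCast]
    split_ifs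
    · exact (one_mul _).symm
    · rw [neg_inv, ← one_sub_zpow_neg_mul_one_sub_zpow_one_sub]
      ring
  · intro h
    have hmk := μ.2.mcount_add_conjP_succ hk
    have hexp : (nstat μ.val : ℤ) - nstat lam.val + 2 * N + 1
        = ((2 * N - 2 * conjP μ.val k + mcount μ.val k + 1 : ℕ) : ℤ) := by
      rw [h.nstat_eq μ.2 lam.2 hk]
      omega
    rw [hexp, zpow_natCast, pow_mul_sub_one_eq hq _ (mcount μ.val k)]
    split_ifs
    · ring
    · rw [zpow_neg, zpow_natCast, ← inv_pow, neg_inv]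
      ring

/-- Let `q` be an odd prime power and let `λ ⊢ N+2` be obtained from `μ ⊢ N` with
`μ ↗↗ λ`.  Then the counting quantity `L̃(λ, μ)` — given by
`q^(2N − 2Σ_{j≥k} m_j(μ)) (1 − (−q)^(−m_{k−1}(μ))) (1 − (−q)^(1−m_{k−1}(μ)))` in the
vertical-domino case, and `q^(2N − 2Σ_{j≥k} m_j(μ)) (q−1)(1 − (−q)^(−m_{k−1}(μ)))` in the
two-consecutive-columns case (with `(−q)^(−m_0(μ)) := 0`, i.e. those factors equal `1` when
`k = 1`) — satisfies `L̃(λ, μ) = ξ_{λ/μ}(−q⁻¹) · q^(n(μ) − n(λ) + 2N + 1)`, where `ξ` is the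
`p₂`-Pieri coefficient of the modified Hall–Littlewood functions. -/
theorem stmt16 (q : ℕ) (hodd : Odd q) (hpp : IsPrimePow q)
    (N k : ℕ) (hk : 1 ≤ k) (μ lam : PartitionF)
    (hμ : psize μ = N) (hlam : psize lam = N + 2) :
    (VDom μ.val lam.val k →
      (if k = 1 then
          (q : ℚ) ^ (2 * N - 2 * ∑ᶠ j, (if k ≤ j then mcount μ.val j else 0))
        else
          (q : ℚ) ^ (2 * N - 2 * ∑ᶠ j, (if k ≤ j then mcount μ.val j else 0)) *
            (1 - (-(q : ℚ)) ^ (-(mcount μ.val (k - 1) : ℤ))) *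
            (1 - (-(q : ℚ)) ^ (1 - (mcount μ.val (k - 1) : ℤ))))
      = (if k = 1 then 1 else
          (1 - (-(q : ℚ)⁻¹) ^ mcount μ.val (k - 1)) *
            (1 - (-(q : ℚ)⁻¹) ^ (mcount μ.val (k - 1) - 1))) *
          (q : ℚ) ^ ((nstat μ.val : ℤ) - (nstat lam.val : ℤ) + 2 * N + 1)) ∧
    (TwoCol μ.val lam.val k →
      (if k = 1 then
          (q : ℚ) ^ (2 * N - 2 * ∑ᶠ j, (if k ≤ j then mcount μ.val j else 0)) * ((q : ℚ) - 1)
        else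
          (q : ℚ) ^ (2 * N - 2 * ∑ᶠ j, (if k ≤ j then mcount μ.val j else 0)) * ((q : ℚ) - 1) *
            (1 - (-(q : ℚ)) ^ (-(mcount μ.val (k - 1) : ℤ))))
      = (-(-(q : ℚ)⁻¹)) ^ mcount μ.val k * (1 + -(q : ℚ)⁻¹) *
          (if k = 1 then 1 else 1 - (-(q : ℚ)⁻¹) ^ mcount μ.val (k - 1)) *
          (q : ℚ) ^ ((nstat μ.val : ℤ) - (nstat lam.val : ℤ) + 2 * N + 1)) :=
  stmt16_general q hpp N k hk μ lam hμ
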